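/- arXiv:math/0407132 — 5 statements merged into one kernel-verified Lean document; each statement's English description precedes it below -/
import Mathlib

section
/- Let N be a real Gaussian random variable with mean −s²/2 and variance s², for some s > 0. Then E[min(1, e^N)] = 2Φ(−s/2), where Φ denotes the standard normal cumulative distribution function. -/
open MeasureTheory ProbabilityTheory Real Set
open scoped ENNReal

lemma pdf_tilt (s : ℝ) (hs : 0 < s) (x : ℝ) :
    Real.exp x * gaussianPDFReal (-(s ^ 2) / 2) ((s ^ 2).toNNReal) x
      = gaussianPDFReal (s ^ 2 / 2) ((s ^ 2).toNNReal) x := by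
  have hv : ((s ^ 2).toNNReal : ℝ) = s ^ 2 := Real.coe_toNNReal _ (sq_nonneg s)
  simp only [gaussianPDFReal, hv]
  rw [mul_comm (Real.exp x), mul_assoc, ← Real.exp_add]
  congr 1
  have h2 : (s:ℝ)^2 ≠ 0 := by positivity
  field_simp
  ring

set_option maxHeartbeats 1000000 in
lemma gauss_map (m : ℝ) (s : ℝ) (hs : 0 < s) :
    (gaussianReal 0 1).map (fun x => s * x + m) = gaussianReal m ((s ^ 2).toNNReal) := by
  have h1 : (gaussianReal 0 1).map (s * ·) = gaussianReal 0 (⟨s^2, sq_nonneg _⟩ * 1) := by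
    have := gaussianReal_map_const_mul (μ := 0) (v := 1) s
    rwa [mul_zero] at this
  have hv : (⟨s^2, sq_nonneg s⟩ * 1 : NNReal) = (s ^ 2).toNNReal := by
    ext; simp [Real.coe_toNNReal _ (sq_nonneg s)]; exact (NNReal.coe_mul _ _).trans (mul_one _)
  have : (fun x => s * x + m) = (fun x => x + m) ∘ (s * ·) := rfl
  rw [this, ← Measure.map_map (measurable_add_const m) (measurable_const_mul s), h1, hv,
    gaussianReal_map_add_const m]
  norm_num

lemma gauss_symm (s : ℝ) (hs : 0 < s) :
    gaussianReal 0 1 (Ici (s / 2)) = gaussianReal 0 1 (Iic (-(s / 2))) := by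
  have h : (gaussianReal 0 1).map ((-1 : ℝ) * ·) = gaussianReal 0 1 := by
    rw [gaussianReal_map_const_mul]
    norm_num
  conv_rhs => rw [← h]
  rw [Measure.map_apply (measurable_const_mul _) measurableSet_Iic]
  congr 1
  ext x
  simp only [mem_preimage, mem_Iic, mem_Ici, neg_one_mul, neg_le_neg_iff]

theorem stmt_6 (s : ℝ) (hs : 0 < s) :
    ∫ x, min 1 (Real.exp x) ∂(gaussianReal (-(s ^ 2) / 2) ((s ^ 2).toNNReal)) =
      2 * ((gaussianReal 0 1) (Set.Iic (-(s / 2)))).toReal := by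
  set v : NNReal := (s ^ 2).toNNReal with hvdef
  have hv : v ≠ 0 := by
    simp [hvdef, Real.toNNReal_eq_zero, not_le]
    positivity
  set μ : Measure ℝ := gaussianReal (-(s ^ 2) / 2) v with hμ
  haveI : IsProbabilityMeasure μ := by rw [hμ]; infer_instance
  -- integrability
  have hmeas : Measurable (fun x : ℝ => min 1 (Real.exp x)) :=
    measurable_const.min Real.measurable_exp
  have hint : Integrable (fun x : ℝ => min 1 (Real.exp x)) μ := by
    refine ⟨hmeas.aestronglyMeasurable, ?_⟩
    apply HasFiniteIntegral.mono' (g := fun _ => (1:ℝ)) (integrable_const (1:ℝ)).2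
    filter_upwards with x
    rw [Real.norm_eq_abs, abs_of_nonneg (le_min zero_le_one (Real.exp_nonneg x))]
    exact min_le_left _ _
  rw [← intervalIntegral.integral_Iio_add_Ici (b := (0:ℝ)) hint.integrableOn hint.integrableOn]
  have h1 : ∫ x in Iio (0:ℝ), min 1 (Real.exp x) ∂μ = ∫ x in Iio (0:ℝ), Real.exp x ∂μ := by
    refine setIntegral_congr_fun measurableSet_Iio (fun x hx => ?_)
    exact min_eq_right (le_of_lt (Real.exp_lt_one_iff.2 hx))
  have h2 : ∫ x in Ici (0:ℝ), min 1 (Real.exp x) ∂μ = (μ (Ici 0)).toReal := by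
    rw [setIntegral_congr_fun measurableSet_Ici (g := fun _ => (1:ℝ))
      (fun x hx => min_eq_left (Real.one_le_exp hx)), setIntegral_const, smul_eq_mul, mul_one]
    rfl
  -- compute the Iio part via exponential tilting
  have h3 : ∫ x in Iio (0:ℝ), Real.exp x ∂μ = (gaussianReal (s ^ 2 / 2) v (Iio 0)).toReal := by
    rw [hμ, gaussianReal_of_var_ne_zero _ hv]
    have hd : (gaussianPDF (-(s ^ 2) / 2) v)
        = fun x => ((gaussianPDFReal (-(s ^ 2) / 2) v x).toNNReal : ℝ≥0∞) := by
      ext x; rw [gaussianPDF]; rfl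
    rw [hd, setIntegral_withDensity_eq_setIntegral_smul
      (measurable_gaussianPDFReal _ _).real_toNNReal _ measurableSet_Iio]
    rw [gaussianReal_apply_eq_integral _ hv, ENNReal.toReal_ofReal
      (integral_nonneg (fun x => gaussianPDFReal_nonneg _ _ _))]
    refine setIntegral_congr_fun measurableSet_Iio (fun x _ => ?_)
    rw [NNReal.smul_def, smul_eq_mul, Real.coe_toNNReal _ (gaussianPDFReal_nonneg _ _ _),
      mul_comm]
    exact pdf_tilt s hs x
  rw [h1, h2, h3]
  -- measure computations
  have hmap1 : gaussianReal (s ^ 2 / 2) v (Iio 0) = gaussianReal 0 1 (Iio (-(s / 2))) := by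
    rw [← gauss_map (s ^ 2 / 2) s hs,
      Measure.map_apply (by fun_prop) measurableSet_Iio]
    congr 1
    ext x
    simp only [mem_preimage, mem_Iio]
    constructor
    · intro h; nlinarith
    · intro h; nlinarith
  have hmap2 : μ (Ici 0) = gaussianReal 0 1 (Ici (s / 2)) := by
    rw [hμ, ← gauss_map (-(s ^ 2) / 2) s hs,
      Measure.map_apply (by fun_prop) measurableSet_Ici]
    congr 1
    ext x
    simp only [mem_preimage, mem_Ici]
    constructor
    · intro h; nlinarith
    · intro h; nlinarith
  have hIio : gaussianReal 0 1 (Iio (-(s / 2))) = gaussianReal 0 1 (Iic (-(s / 2))) := by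
    refine measure_congr (Iio_ae_eq_Iic' ?_)
    exact (gaussianReal_absolutelyContinuous 0 one_ne_zero) (measure_singleton _)
  rw [hmap1, hmap2, hIio, gauss_symm s hs]
  have hfin : gaussianReal 0 1 (Iic (-(s / 2))) ≠ ⊤ := measure_ne_top _ _
  rw [two_mul]
end

section
/- Let Γ : [0,1] → ℝ be absolutely continuous. Then min(1, e^{Γ(1)}) = min(1, e^{Γ(0)}) + ∫_0^1 1_{{Γ(u) < 0}} Γ'(u) e^{Γ(u)} du. -/
open MeasureTheory intervalIntegral Filter Topology Set

/-- FTC for "absolutely continuous" `Γ` composed with a `C¹` function whose derivative `H'`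
is continuous and globally bounded:
`∫₀¹ H'(Γ u) Γ'(u) du = ∫_0^{Γ 1} H' - ∫_0^{Γ 0} H'`. -/
lemma ftc_ac_aux (H' : ℝ → ℝ) (M : ℝ) (hH'c : Continuous H') (hM : ∀ y, |H' y| ≤ M)
    (Γ Γ' : ℝ → ℝ)
    (hcont : ContinuousOn Γ (Set.Icc 0 1))
    (hint : IntegrableOn Γ' (Set.Icc 0 1))
    (hftc : ∀ u ∈ Set.Icc (0 : ℝ) 1, Γ u = Γ 0 + ∫ t in (0 : ℝ)..u, Γ' t) :
    ∫ u in (0 : ℝ)..1, H' (Γ u) * Γ' u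
      = (∫ t in (0 : ℝ)..(Γ 1), H' t) - ∫ t in (0 : ℝ)..(Γ 0), H' t := by
  have hM0 : 0 ≤ M := le_trans (abs_nonneg _) (hM 0)
  -- interval integrability of Γ'
  have hΓ'i1 : IntervalIntegrable Γ' volume 0 1 := by
    rw [intervalIntegrable_iff']
    simpa [uIcc_of_le (zero_le_one' ℝ)] using hint
  -- the extension of Γ' to ℝ by 0
  set f : ℝ → ℝ := (Set.Icc (0 : ℝ) 1).indicator Γ' with hf_def
  have hf : Integrable f := hint.integrable_indicator measurableSet_Icc
  -- continuous approximations of Γ' in L¹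
  have happrox : ∀ n : ℕ, ∃ g : ℝ → ℝ, HasCompactSupport g ∧
      (∫ x, ‖f x - g x‖) ≤ 1 / (n + 1) ∧ Continuous g ∧ Integrable g := by
    intro n
    exact hf.exists_hasCompactSupport_integral_sub_le (by positivity)
  choose h hsupp hle hcontn hintn using happrox
  -- the corresponding primitives
  set Γn : ℕ → ℝ → ℝ := fun n u => Γ 0 + ∫ t in (0 : ℝ)..u, h n t with hΓn_def
  have hΓn_deriv : ∀ n u, HasDerivAt (Γn n) (h n u) u := by
    intro n u
    exact HasDerivAt.const_add _
      (integral_hasDerivAt_right ((hcontn n).intervalIntegrable _ _)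
        ((hcontn n).stronglyMeasurable.stronglyMeasurableAtFilter)
        (hcontn n).continuousAt)
  have hΓn_cont : ∀ n, Continuous (Γn n) := fun n =>
    continuous_iff_continuousAt.2 fun u => (hΓn_deriv n u).continuousAt
  -- the primitive of H'
  set H : ℝ → ℝ := fun y => ∫ t in (0 : ℝ)..y, H' t with hH_def
  have hH : ∀ y, HasDerivAt H (H' y) y := fun y =>
    integral_hasDerivAt_right (hH'c.intervalIntegrable _ _)
      hH'c.stronglyMeasurable.stronglyMeasurableAtFilter hH'c.continuousAt
  -- FTC for the smooth approximations
  have key : ∀ n, ∫ u in (0 : ℝ)..1, H' (Γn n u) * h n u = H (Γn n 1) - H (Γn n 0) := by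
    intro n
    refine integral_eq_sub_of_hasDerivAt (f := fun u => H (Γn n u))
      (f' := fun u => H' (Γn n u) * h n u) (fun u _ => ?_) ?_
    · exact (hH (Γn n u)).comp u (hΓn_deriv n u)
    · exact ((hH'c.comp (hΓn_cont n)).mul (hcontn n)).intervalIntegrable _ _
  -- L¹ bound on [0,1]
  have hdiff : ∀ n, ∫ u in (0 : ℝ)..1, |h n u - Γ' u| ≤ 1 / (n + 1) := by
    intro n
    rw [intervalIntegral.integral_of_le (zero_le_one' ℝ)]
    have h1 : ∀ x ∈ Set.Ioc (0 : ℝ) 1, |h n x - Γ' x| = ‖f x - h n x‖ := by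
      intro x hx
      rw [hf_def, Set.indicator_of_mem (Set.Ioc_subset_Icc_self hx)]
      rw [Real.norm_eq_abs, abs_sub_comm]
    rw [MeasureTheory.setIntegral_congr_fun measurableSet_Ioc h1]
    calc ∫ x in Set.Ioc (0 : ℝ) 1, ‖f x - h n x‖
        ≤ ∫ x, ‖f x - h n x‖ :=
          setIntegral_le_integral ((hf.sub (hintn n)).norm)
            (Filter.Eventually.of_forall fun x => norm_nonneg _)
      _ ≤ 1 / (n + 1) := hle n
  have hΓ'sub_int : ∀ n, IntervalIntegrable (fun u => h n u - Γ' u) volume 0 1 :=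
    fun n => ((hcontn n).intervalIntegrable _ _).sub hΓ'i1
  -- pointwise bound for the primitives
  have hΓn_close : ∀ n, ∀ u ∈ Set.Icc (0 : ℝ) 1, |Γn n u - Γ u| ≤ 1 / (n + 1) := by
    intro n u hu
    have hΓ'iu : IntervalIntegrable Γ' volume 0 u := by
      refine hΓ'i1.mono_set ?_
      rw [uIcc_of_le hu.1, uIcc_of_le (zero_le_one' ℝ)]
      exact Set.Icc_subset_Icc le_rfl hu.2
    have hhiu : IntervalIntegrable (h n) volume 0 u := (hcontn n).intervalIntegrable _ _
    have : Γn n u - Γ u = ∫ t in (0 : ℝ)..u, (h n t - Γ' t) := by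
      rw [intervalIntegral.integral_sub hhiu hΓ'iu, hΓn_def, hftc u hu]
      ring
    rw [this]
    calc |∫ t in (0 : ℝ)..u, (h n t - Γ' t)|
        ≤ ∫ t in (0 : ℝ)..u, |h n t - Γ' t| :=
          intervalIntegral.abs_integral_le_integral_abs hu.1
      _ ≤ ∫ t in (0 : ℝ)..1, |h n t - Γ' t| := by
          refine intervalIntegral.integral_mono_interval le_rfl hu.1 hu.2
            (Filter.Eventually.of_forall fun x => abs_nonneg _) ((hΓ'sub_int n).abs)
      _ ≤ 1 / (n + 1) := hdiff n
  have htend0 : Tendsto (fun n : ℕ => 1 / ((n : ℝ) + 1)) atTop (𝓝 0) :=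
    tendsto_one_div_add_atTop_nhds_zero_nat
  have hΓn_tendsto : ∀ u ∈ Set.Icc (0 : ℝ) 1,
      Tendsto (fun n => Γn n u) atTop (𝓝 (Γ u)) := by
    intro u hu
    have : Tendsto (fun n => Γn n u - Γ u) atTop (𝓝 0) :=
      squeeze_zero_norm (fun n => by
        simpa [Real.norm_eq_abs] using hΓn_close n u hu) htend0
    have := this.add (tendsto_const_nhds (x := Γ u))
    simpa using this
  -- convergence of ∫ H'(Γn) Γ'
  have hmeasΓ' : AEStronglyMeasurable Γ' (volume.restrict (Set.Ioc (0:ℝ) 1)) :=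
    (hint.mono_set Set.Ioc_subset_Icc_self).aestronglyMeasurable
  have hB : Tendsto (fun n => ∫ u in (0 : ℝ)..1, H' (Γn n u) * Γ' u) atTop
      (𝓝 (∫ u in (0 : ℝ)..1, H' (Γ u) * Γ' u)) := by
    refine intervalIntegral.tendsto_integral_filter_of_dominated_convergence
      (fun u => M * |Γ' u|) ?_ ?_ ?_ ?_
    · refine Filter.Eventually.of_forall fun n => ?_
      have : AEStronglyMeasurable (fun u => H' (Γn n u)) (volume.restrict (Set.uIoc (0:ℝ) 1)) :=
        (hH'c.comp (hΓn_cont n)).aestronglyMeasurable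
      refine this.mul ?_
      rwa [Set.uIoc_of_le (zero_le_one' ℝ)]
    · refine Filter.Eventually.of_forall fun n => Filter.Eventually.of_forall fun x _ => ?_
      rw [Real.norm_eq_abs, abs_mul]
      exact mul_le_mul_of_nonneg_right (hM _) (abs_nonneg _)
    · exact (hΓ'i1.abs).const_mul M
    · refine Filter.Eventually.of_forall fun x hx => ?_
      have hx' : x ∈ Set.Icc (0 : ℝ) 1 := by
        rw [Set.uIoc_of_le (zero_le_one' ℝ)] at hx
        exact Set.Ioc_subset_Icc_self hx
      exact ((hH'c.continuousAt.tendsto).comp (hΓn_tendsto x hx')).mul tendsto_const_nhds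
  -- the error term
  have hAB : ∀ n, |(∫ u in (0 : ℝ)..1, H' (Γn n u) * h n u)
      - ∫ u in (0 : ℝ)..1, H' (Γn n u) * Γ' u| ≤ M * (1 / (n + 1)) := by
    intro n
    have hint1 : IntervalIntegrable (fun u => H' (Γn n u) * h n u) volume 0 1 :=
      ((hH'c.comp (hΓn_cont n)).mul (hcontn n)).intervalIntegrable _ _
    have hint2 : IntervalIntegrable (fun u => H' (Γn n u) * Γ' u) volume 0 1 := by
      rw [intervalIntegrable_iff_integrableOn_Ioc_of_le (zero_le_one' ℝ)]
      refine Integrable.bdd_mul (c := M) (hint.mono_set Set.Ioc_subset_Icc_self)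
        (hH'c.comp (hΓn_cont n)).aestronglyMeasurable (Filter.Eventually.of_forall fun x => ?_)
      simpa [Real.norm_eq_abs] using hM (Γn n x)
    rw [← intervalIntegral.integral_sub hint1 hint2]
    have heq : ∀ u, H' (Γn n u) * h n u - H' (Γn n u) * Γ' u
        = H' (Γn n u) * (h n u - Γ' u) := fun u => by ring
    simp_rw [heq]
    calc |∫ u in (0 : ℝ)..1, H' (Γn n u) * (h n u - Γ' u)|
        ≤ ∫ u in (0 : ℝ)..1, |H' (Γn n u) * (h n u - Γ' u)| :=
          intervalIntegral.abs_integral_le_integral_abs (zero_le_one' ℝ)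
      _ ≤ ∫ u in (0 : ℝ)..1, M * |h n u - Γ' u| := by
          refine intervalIntegral.integral_mono_on (zero_le_one' ℝ) ?_ ?_ ?_
          · have hint3 : IntervalIntegrable (fun u => H' (Γn n u) * (h n u - Γ' u))
                volume 0 1 := by
              simpa only [mul_sub] using hint1.sub hint2
            exact hint3.abs
          · exact ((hΓ'sub_int n).abs).const_mul M
          · intro x _
            rw [abs_mul]
            exact mul_le_mul_of_nonneg_right (hM _) (abs_nonneg _)
      _ = M * ∫ u in (0 : ℝ)..1, |h n u - Γ' u| := intervalIntegral.integral_const_mul _ _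
      _ ≤ M * (1 / (n + 1)) := mul_le_mul_of_nonneg_left (hdiff n) hM0
  -- put everything together
  have hA : Tendsto (fun n => ∫ u in (0 : ℝ)..1, H' (Γn n u) * h n u) atTop
      (𝓝 (∫ u in (0 : ℝ)..1, H' (Γ u) * Γ' u)) := by
    have hz : Tendsto (fun n => (∫ u in (0 : ℝ)..1, H' (Γn n u) * h n u)
        - ∫ u in (0 : ℝ)..1, H' (Γn n u) * Γ' u) atTop (𝓝 0) := by
      refine squeeze_zero_norm (fun n => ?_) (by simpa using htend0.const_mul M)
      simpa [Real.norm_eq_abs] using hAB n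
    have := hz.add hB
    simpa using this
  have hA' : Tendsto (fun n => H (Γn n 1) - H (Γn n 0)) atTop
      (𝓝 (∫ u in (0 : ℝ)..1, H' (Γ u) * Γ' u)) := by
    refine hA.congr fun n => key n
  have hA'' : Tendsto (fun n => H (Γn n 1) - H (Γn n 0)) atTop
      (𝓝 (H (Γ 1) - H (Γ 0))) := by
    have h1 : Tendsto (fun n => H (Γn n 1)) atTop (𝓝 (H (Γ 1))) :=
      ((hH (Γ 1)).continuousAt.tendsto).comp
        (hΓn_tendsto 1 ⟨zero_le_one, le_rfl⟩)
    have h0 : Tendsto (fun n => H (Γn n 0)) atTop (𝓝 (H (Γ 0))) :=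
      ((hH (Γ 0)).continuousAt.tendsto).comp
        (hΓn_tendsto 0 ⟨le_rfl, zero_le_one⟩)
    exact h1.sub h0
  exact tendsto_nhds_unique hA' hA''

theorem stmt_8 (Γ Γ' : ℝ → ℝ)
    (hcont : ContinuousOn Γ (Set.Icc 0 1))
    (hint : IntegrableOn Γ' (Set.Icc 0 1))
    (hftc : ∀ u ∈ Set.Icc (0 : ℝ) 1, Γ u = Γ 0 + ∫ t in (0 : ℝ)..u, Γ' t) :
    min 1 (Real.exp (Γ 1)) =
      min 1 (Real.exp (Γ 0)) +
        ∫ u in (0 : ℝ)..1, (if Γ u < 0 then Γ' u * Real.exp (Γ u) else 0) := by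
  classical
  -- the continuous approximations of `t ↦ 1_{t<0} e^t`
  set G : ℕ → ℝ → ℝ := fun k t => Real.exp t * min 1 ((k + 1) * max 0 (-t)) with hG_def
  have hGc : ∀ k, Continuous (G k) := by
    intro k
    exact Real.continuous_exp.mul (continuous_const.min
      (continuous_const.mul (continuous_const.max continuous_neg)))
  have hGnonneg : ∀ k t, 0 ≤ G k t := by
    intro k t
    refine mul_nonneg (Real.exp_pos t).le (le_min zero_le_one ?_)
    positivity
  have hGbdd : ∀ k t, |G k t| ≤ 1 := by
    intro k t
    rw [abs_of_nonneg (hGnonneg k t)]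
    rcases le_or_gt t 0 with ht | ht
    · have h1 : Real.exp t ≤ 1 := by
        rw [← Real.exp_zero]; exact Real.exp_le_exp.2 ht
      have h2 : min 1 ((k + 1 : ℝ) * max 0 (-t)) ≤ 1 := min_le_left _ _
      have h3 : (0:ℝ) ≤ min 1 ((k + 1 : ℝ) * max 0 (-t)) := by
        refine le_min zero_le_one ?_; positivity
      calc Real.exp t * min 1 ((k + 1 : ℝ) * max 0 (-t))
          ≤ 1 * 1 := mul_le_mul h1 h2 h3 zero_le_one
        _ = 1 := one_mul 1
    · have : max 0 (-t) = 0 := max_eq_left (by linarith)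
      simp [hG_def, this]
  have hGlim : ∀ t : ℝ, Tendsto (fun k => G k t) atTop
      (𝓝 (if t < 0 then Real.exp t else 0)) := by
    intro t
    rcases lt_or_ge t 0 with ht | ht
    · rw [if_pos ht]
      refine tendsto_const_nhds.congr' ?_
      filter_upwards [Filter.eventually_ge_atTop ⌈1 / (-t)⌉₊] with k hk
      have hkt : (1:ℝ) ≤ (k + 1) * max 0 (-t) := by
        have h1 : (1:ℝ) / (-t) ≤ (k:ℝ) := le_trans (Nat.le_ceil _) (by exact_mod_cast hk)
        have h2 : max 0 (-t) = -t := max_eq_right (by linarith)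
        rw [h2]
        have ht' : (0:ℝ) < -t := by linarith
        calc (1:ℝ) = (1 / (-t)) * (-t) := by rw [one_div_mul_cancel ht'.ne']
          _ ≤ (k:ℝ) * (-t) := mul_le_mul_of_nonneg_right h1 ht'.le
          _ ≤ ((k:ℝ) + 1) * (-t) := by nlinarith
      have : min 1 ((k + 1 : ℝ) * max 0 (-t)) = 1 := min_eq_left hkt
      simp [hG_def, this]
    · rw [if_neg (not_lt.2 ht)]
      have : ∀ k : ℕ, G k t = 0 := by
        intro k
        have : max 0 (-t) = 0 := max_eq_left (by linarith)
        simp [hG_def, this]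
      simpa [this] using tendsto_const_nhds
  -- apply the FTC lemma to each `G k`
  have key : ∀ k, ∫ u in (0 : ℝ)..1, G k (Γ u) * Γ' u
      = (∫ t in (0 : ℝ)..(Γ 1), G k t) - ∫ t in (0 : ℝ)..(Γ 0), G k t := fun k =>
    ftc_ac_aux (G k) 1 (hGc k) (hGbdd k) Γ Γ' hcont hint hftc
  -- limits of the primitives
  have hne0 : ∀ᵐ x : ℝ ∂volume, x ≠ (0:ℝ) := by
    rw [MeasureTheory.ae_iff]
    have : {x : ℝ | ¬ x ≠ 0} = {(0:ℝ)} := by ext x; simp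
    rw [this]
    exact measure_singleton 0
  have Hlim : ∀ y : ℝ, Tendsto (fun k => ∫ t in (0 : ℝ)..y, G k t) atTop
      (𝓝 (min 1 (Real.exp y) - 1)) := by
    intro y
    rcases le_or_gt 0 y with hy | hy
    · have hmin : min 1 (Real.exp y) = 1 := min_eq_left (Real.one_le_exp hy)
      have hzero : ∀ k, ∫ t in (0 : ℝ)..y, G k t = 0 := by
        intro k
        have : EqOn (G k) 0 (Set.uIcc 0 y) := by
          intro t ht
          rw [Set.uIcc_of_le hy] at ht
          have : max 0 (-t) = 0 := max_eq_left (by simpa using neg_nonpos.2 ht.1)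
          simp [hG_def, this]
        rw [intervalIntegral.integral_congr this]
        simp
      rw [hmin]
      simpa [hzero] using tendsto_const_nhds (x := (0:ℝ))
    · have hmin : min 1 (Real.exp y) = Real.exp y := by
        refine min_eq_right ?_
        rw [← Real.exp_zero]; exact Real.exp_le_exp.2 hy.le
      have hDCT : Tendsto (fun k => ∫ t in (0 : ℝ)..y, G k t) atTop
          (𝓝 (∫ t in (0 : ℝ)..y, Real.exp t)) := by
        refine intervalIntegral.tendsto_integral_filter_of_dominated_convergence
          (fun _ => 1) ?_ ?_ ?_ ?_
        · exact Filter.Eventually.of_forall fun k => (hGc k).aestronglyMeasurable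
        · exact Filter.Eventually.of_forall fun k => Filter.Eventually.of_forall
            fun x _ => by simpa [Real.norm_eq_abs] using hGbdd k x
        · exact intervalIntegrable_const
        · filter_upwards [hne0] with x hx hxmem
          have hx0 : x < 0 ∨ 0 < x := hx.lt_or_gt
          rcases lt_or_ge x 0 with hxlt | hxge
          · simpa [if_pos hxlt] using hGlim x
          · -- x ∈ Ι 0 y with y < 0 means x ≤ 0, and x ≠ 0, so x < 0; contradiction
            exfalso
            rw [Set.uIoc_of_ge hy.le] at hxmem
            rcases hx0 with h | h
            · exact absurd h (not_lt.2 hxge)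
            · exact absurd hxmem.2 (not_le.2 h)
      rw [hmin]
      have : ∫ t in (0 : ℝ)..y, Real.exp t = Real.exp y - 1 := by
        rw [integral_exp, Real.exp_zero]
      rwa [this] at hDCT
  -- limit of the RHS of `key`
  have hR : Tendsto (fun k => (∫ t in (0 : ℝ)..(Γ 1), G k t) - ∫ t in (0 : ℝ)..(Γ 0), G k t)
      atTop (𝓝 (min 1 (Real.exp (Γ 1)) - min 1 (Real.exp (Γ 0)))) := by
    have := (Hlim (Γ 1)).sub (Hlim (Γ 0))
    have heq : min 1 (Real.exp (Γ 1)) - 1 - (min 1 (Real.exp (Γ 0)) - 1)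
        = min 1 (Real.exp (Γ 1)) - min 1 (Real.exp (Γ 0)) := by ring
    rwa [heq] at this
  -- limit of the LHS of `key` via dominated convergence
  have hΓmeas : AEStronglyMeasurable Γ (volume.restrict (Set.Ioc (0:ℝ) 1)) :=
    (hcont.mono Set.Ioc_subset_Icc_self).aestronglyMeasurable measurableSet_Ioc
  have hΓ'meas : AEStronglyMeasurable Γ' (volume.restrict (Set.Ioc (0:ℝ) 1)) :=
    (hint.mono_set Set.Ioc_subset_Icc_self).aestronglyMeasurable
  have hΓ'i1 : IntervalIntegrable Γ' volume 0 1 := by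
    rw [intervalIntegrable_iff']
    simpa [Set.uIcc_of_le (zero_le_one' ℝ)] using hint
  have hL : Tendsto (fun k => ∫ u in (0 : ℝ)..1, G k (Γ u) * Γ' u) atTop
      (𝓝 (∫ u in (0 : ℝ)..1, (if Γ u < 0 then Real.exp (Γ u) else 0) * Γ' u)) := by
    refine intervalIntegral.tendsto_integral_filter_of_dominated_convergence
      (fun u => |Γ' u|) ?_ ?_ ?_ ?_
    · refine Filter.Eventually.of_forall fun k => ?_
      rw [Set.uIoc_of_le (zero_le_one' ℝ)]
      exact ((hGc k).comp_aestronglyMeasurable hΓmeas).mul hΓ'meas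
    · refine Filter.Eventually.of_forall fun k => Filter.Eventually.of_forall fun x _ => ?_
      rw [Real.norm_eq_abs, abs_mul]
      simpa using mul_le_mul_of_nonneg_right (hGbdd k (Γ x)) (abs_nonneg (Γ' x))
    · exact hΓ'i1.abs
    · exact Filter.Eventually.of_forall fun x _ =>
        (hGlim (Γ x)).mul tendsto_const_nhds
  have hkey' : Tendsto (fun k => (∫ t in (0 : ℝ)..(Γ 1), G k t) - ∫ t in (0 : ℝ)..(Γ 0), G k t)
      atTop (𝓝 (∫ u in (0 : ℝ)..1, (if Γ u < 0 then Real.exp (Γ u) else 0) * Γ' u)) :=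
    hL.congr fun k => key k
  have hmain : ∫ u in (0 : ℝ)..1, (if Γ u < 0 then Real.exp (Γ u) else 0) * Γ' u
      = min 1 (Real.exp (Γ 1)) - min 1 (Real.exp (Γ 0)) :=
    tendsto_nhds_unique hkey' hR
  have hcongr : (fun u => if Γ u < 0 then Γ' u * Real.exp (Γ u) else 0)
      = fun u => (if Γ u < 0 then Real.exp (Γ u) else 0) * Γ' u := by
    funext u
    by_cases hu : Γ u < 0
    · simp [hu, mul_comm]
    · simp [hu]
  rw [show (∫ u in (0 : ℝ)..1, (if Γ u < 0 then Γ' u * Real.exp (Γ u) else 0))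
      = ∫ u in (0 : ℝ)..1, (if Γ u < 0 then Real.exp (Γ u) else 0) * Γ' u from by
    rw [hcongr]]
  linarith [hmain]
end

section
/- Let X be a real random variable, τ, τ_N > 0, and Φ the standard normal CDF. Then sup_u |P(X/τ ≤ u) − Φ(u)| ≤ sup_v |P(X/τ_N ≤ v) − Φ(v)| + max(1, τ_N/τ) · |1 − τ/τ_N|. -/
open MeasureTheory ProbabilityTheory Real

noncomputable def stdPhi (u : ℝ) : ℝ := ((gaussianReal 0 1) (Set.Iic u)).toReal

lemma stdf_eq (x : ℝ) :
    gaussianPDFReal 0 1 x = (Real.sqrt (2 * π))⁻¹ * Real.exp (-x ^ 2 / 2) := by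
  simp [gaussianPDFReal]

lemma stdf_anti {x y : ℝ} (h : |y| ≤ |x|) :
    gaussianPDFReal 0 1 x ≤ gaussianPDFReal 0 1 y := by
  rw [stdf_eq, stdf_eq]
  have hsq : y ^ 2 ≤ x ^ 2 := by
    rw [← sq_abs x, ← sq_abs y]
    exact pow_le_pow_left₀ (abs_nonneg _) h 2
  exact mul_le_mul_of_nonneg_left (Real.exp_le_exp.2 (by linarith)) (by positivity)

lemma stdf_abs_mul_le_one (x : ℝ) : |x| * gaussianPDFReal 0 1 x ≤ 1 := by
  rw [stdf_eq]
  have h1 : (Real.sqrt (2 * π))⁻¹ ≤ 1 := by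
    rw [inv_le_one_iff₀]
    right
    exact Real.one_le_sqrt.2 (by nlinarith [Real.pi_gt_three])
  have h2 : |x| ≤ Real.exp (x ^ 2 / 2) := by
    calc |x| ≤ 1 + x ^ 2 / 2 := by nlinarith [sq_nonneg (|x| - 1), sq_abs x]
      _ ≤ Real.exp (x ^ 2 / 2) := by
          nlinarith [Real.add_one_le_exp (x ^ 2 / 2)]
  have h3 : |x| * Real.exp (-x ^ 2 / 2) ≤ 1 := by
    rw [neg_div, Real.exp_neg, ← div_eq_mul_inv, div_le_one (Real.exp_pos _)]
    exact h2
  calc |x| * ((Real.sqrt (2 * π))⁻¹ * Real.exp (-x ^ 2 / 2))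
      ≤ |x| * (1 * Real.exp (-x ^ 2 / 2)) := by
        gcongr
      _ = |x| * Real.exp (-x ^ 2 / 2) := by ring
      _ ≤ 1 := h3

lemma stdPhi_eq (u : ℝ) : stdPhi u = ∫ x in Set.Iic u, gaussianPDFReal 0 1 x := by
  rw [stdPhi, gaussianReal_apply_eq_integral 0 one_ne_zero,
    ENNReal.toReal_ofReal
      (setIntegral_nonneg measurableSet_Iic fun x _ => gaussianPDFReal_nonneg 0 1 x)]

lemma stdPhi_mono : Monotone stdPhi := fun a b hab =>
  ENNReal.toReal_mono (measure_ne_top _ _) (measure_mono (Set.Iic_subset_Iic.2 hab))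

lemma stdPhi_key {a b : ℝ} (hab : a ≤ b) (d : ℝ)
    (hd : ∀ x ∈ Set.Ioc a b, gaussianPDFReal 0 1 x ≤ gaussianPDFReal 0 1 d) :
    stdPhi b - stdPhi a ≤ (b - a) * gaussianPDFReal 0 1 d := by
  have hint := integrable_gaussianPDFReal 0 1
  have h1 : stdPhi b - stdPhi a = ∫ x in Set.Ioc a b, gaussianPDFReal 0 1 x := by
    rw [stdPhi_eq, stdPhi_eq,
      intervalIntegral.integral_Iic_sub_Iic hint.integrableOn hint.integrableOn,
      intervalIntegral.integral_of_le hab]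
  rw [h1]
  calc (∫ x in Set.Ioc a b, gaussianPDFReal 0 1 x)
      ≤ ∫ _x in Set.Ioc a b, gaussianPDFReal 0 1 d :=
        setIntegral_mono_on hint.integrableOn
          (integrableOn_const measure_Ioc_lt_top.ne) measurableSet_Ioc hd
    _ = (b - a) * gaussianPDFReal 0 1 d := by
        rw [setIntegral_const, measureReal_def, Real.volume_Ioc, ENNReal.toReal_ofReal (sub_nonneg.2 hab),
          smul_eq_mul]

lemma stdPhi_err (c u : ℝ) (hc : 0 < c) :
    |stdPhi (c * u) - stdPhi u| ≤ max 1 c⁻¹ * |c - 1| := by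
  have hfnn := gaussianPDFReal_nonneg 0 1
  rcases le_total 0 u with hu | hu <;> rcases le_total c 1 with h1 | h1
  · -- 0 ≤ u, c ≤ 1 : c*u ≤ u
    have hcu : c * u ≤ u := by nlinarith
    have hcu0 : 0 ≤ c * u := by positivity
    rw [abs_of_nonpos (sub_nonpos.2 (stdPhi_mono hcu)), neg_sub]
    have hk := stdPhi_key hcu (c * u) (fun x hx => stdf_anti (by
      rw [abs_of_nonneg hcu0, abs_of_nonneg (hcu0.trans hx.1.le)]; exact hx.1.le))
    refine hk.trans ?_
    have hb : c * (u * gaussianPDFReal 0 1 (c * u)) ≤ 1 := by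
      have := stdf_abs_mul_le_one (c * u)
      rwa [abs_of_nonneg hcu0, mul_assoc] at this
    have hbound : u * gaussianPDFReal 0 1 (c * u) ≤ c⁻¹ := by
      rw [← one_div, le_div_iff₀ hc, mul_comm]
      exact hb
    calc (u - c * u) * gaussianPDFReal 0 1 (c * u)
        = (1 - c) * (u * gaussianPDFReal 0 1 (c * u)) := by ring
      _ ≤ (1 - c) * c⁻¹ := by
          have : (0:ℝ) ≤ 1 - c := by linarith
          exact mul_le_mul_of_nonneg_left hbound this
      _ = c⁻¹ * (1 - c) := by ring
      _ ≤ max 1 c⁻¹ * |c - 1| := by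
          rw [abs_of_nonpos (by linarith : c - 1 ≤ 0), neg_sub]
          exact mul_le_mul_of_nonneg_right (le_max_right _ _) (by linarith)
  · -- 0 ≤ u, 1 ≤ c : u ≤ c*u
    have hcu : u ≤ c * u := by nlinarith
    rw [abs_of_nonneg (sub_nonneg.2 (stdPhi_mono hcu))]
    have hk := stdPhi_key hcu u (fun x hx => stdf_anti (by
      rw [abs_of_nonneg hu, abs_of_nonneg (hu.trans hx.1.le)]; exact hx.1.le))
    refine hk.trans ?_
    have hb : u * gaussianPDFReal 0 1 u ≤ 1 := by
      have := stdf_abs_mul_le_one u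
      rwa [abs_of_nonneg hu] at this
    calc (c * u - u) * gaussianPDFReal 0 1 u
        = (c - 1) * (u * gaussianPDFReal 0 1 u) := by ring
      _ ≤ (c - 1) * 1 := mul_le_mul_of_nonneg_left hb (by linarith)
      _ ≤ max 1 c⁻¹ * |c - 1| := by
          rw [abs_of_nonneg (by linarith), mul_one]
          exact le_mul_of_one_le_left (by linarith) (le_max_left _ _)
  · -- u ≤ 0, c ≤ 1 : u ≤ c*u ≤ 0
    have hcu : u ≤ c * u := by nlinarith
    have hcu0 : c * u ≤ 0 := mul_nonpos_iff.2 (Or.inl ⟨hc.le, hu⟩)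
    rw [abs_of_nonneg (sub_nonneg.2 (stdPhi_mono hcu))]
    have hk := stdPhi_key hcu (c * u) (fun x hx => stdf_anti (by
      rw [abs_of_nonpos hcu0, abs_of_nonpos (hx.2.trans hcu0)]
      linarith [hx.2]))
    refine hk.trans ?_
    have hb : c * (-u * gaussianPDFReal 0 1 (c * u)) ≤ 1 := by
      have := stdf_abs_mul_le_one (c * u)
      rw [abs_of_nonpos hcu0] at this
      calc c * (-u * gaussianPDFReal 0 1 (c * u))
          = -(c * u) * gaussianPDFReal 0 1 (c * u) := by ring
        _ ≤ 1 := this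
    have hbound : -u * gaussianPDFReal 0 1 (c * u) ≤ c⁻¹ := by
      rw [← one_div, le_div_iff₀ hc, mul_comm]
      exact hb
    calc (c * u - u) * gaussianPDFReal 0 1 (c * u)
        = (1 - c) * (-u * gaussianPDFReal 0 1 (c * u)) := by ring
      _ ≤ (1 - c) * c⁻¹ := mul_le_mul_of_nonneg_left hbound (by linarith)
      _ = c⁻¹ * (1 - c) := by ring
      _ ≤ max 1 c⁻¹ * |c - 1| := by
          rw [abs_of_nonpos (by linarith : c - 1 ≤ 0), neg_sub]
          exact mul_le_mul_of_nonneg_right (le_max_right _ _) (by linarith)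
  · -- u ≤ 0, 1 ≤ c : c*u ≤ u ≤ 0
    have hcu : c * u ≤ u := by nlinarith
    rw [abs_of_nonpos (sub_nonpos.2 (stdPhi_mono hcu)), neg_sub]
    have hk := stdPhi_key hcu u (fun x hx => stdf_anti (by
      rw [abs_of_nonpos hu, abs_of_nonpos (hx.2.trans hu)]
      linarith [hx.2]))
    refine hk.trans ?_
    have hb : -u * gaussianPDFReal 0 1 u ≤ 1 := by
      have := stdf_abs_mul_le_one u
      rwa [abs_of_nonpos hu] at this
    calc (u - c * u) * gaussianPDFReal 0 1 u
        = (c - 1) * (-u * gaussianPDFReal 0 1 u) := by ring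
      _ ≤ (c - 1) * 1 := mul_le_mul_of_nonneg_left hb (by linarith)
      _ ≤ max 1 c⁻¹ * |c - 1| := by
          rw [abs_of_nonneg (by linarith), mul_one]
          exact le_mul_of_one_le_left (by linarith) (le_max_left _ _)

/- Rescaling lemma:
`sup_u |P(X/τ ≤ u) − Φ(u)|
  ≤ sup_v |P(X/τ_N ≤ v) − Φ(v)| + max(1, τ_N/τ)·|1 − τ/τ_N|`. -/
theorem stmt_10 {Ω : Type*} [MeasurableSpace Ω] (μ : Measure Ω)
    [IsProbabilityMeasure μ] (X : Ω → ℝ) (hX : Measurable X)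
    (τ τN : ℝ) (hτ : 0 < τ) (hτN : 0 < τN) :
    (⨆ u : ℝ, |(μ {ω | X ω / τ ≤ u}).toReal -
        ((gaussianReal 0 1) (Set.Iic u)).toReal|) ≤
      (⨆ v : ℝ, |(μ {ω | X ω / τN ≤ v}).toReal -
        ((gaussianReal 0 1) (Set.Iic v)).toReal|) +
      max 1 (τN / τ) * |1 - τ / τN| := by
  set c : ℝ := τ / τN with hcdef
  have hc : 0 < c := div_pos hτ hτN
  have hterm : ∀ v : ℝ,
      |(μ {ω | X ω / τN ≤ v}).toReal - ((gaussianReal 0 1) (Set.Iic v)).toReal| ≤ 2 := by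
    intro v
    have h1 : (μ {ω | X ω / τN ≤ v}).toReal ≤ 1 := by
      simpa using ENNReal.toReal_mono ENNReal.one_ne_top prob_le_one
    have h2 : ((gaussianReal 0 1) (Set.Iic v)).toReal ≤ 1 := by
      simpa using ENNReal.toReal_mono ENNReal.one_ne_top prob_le_one
    have h3 : (0:ℝ) ≤ (μ {ω | X ω / τN ≤ v}).toReal := ENNReal.toReal_nonneg
    have h4 : (0:ℝ) ≤ ((gaussianReal 0 1) (Set.Iic v)).toReal := ENNReal.toReal_nonneg
    rw [abs_le]; constructor <;> linarith
  have bdd : BddAbove (Set.range fun v : ℝ =>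
      |(μ {ω | X ω / τN ≤ v}).toReal - ((gaussianReal 0 1) (Set.Iic v)).toReal|) := by
    refine ⟨2, ?_⟩
    rintro x ⟨v, rfl⟩
    exact hterm v
  apply ciSup_le
  intro u
  have hset : {ω | X ω / τ ≤ u} = {ω | X ω / τN ≤ c * u} := by
    ext ω
    simp only [Set.mem_setOf_eq]
    rw [div_le_iff₀ hτ, div_le_iff₀ hτN, hcdef]
    constructor <;> intro h
    · calc X ω ≤ u * τ := h
        _ = τ / τN * u * τN := by field_simp
    · calc X ω ≤ τ / τN * u * τN := h
        _ = u * τ := by field_simp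
  have herr := stdPhi_err c u hc
  have hΦ : ∀ w : ℝ, stdPhi w = ((gaussianReal 0 1) (Set.Iic w)).toReal := fun _ => rfl
  have hmaxeq : max 1 c⁻¹ * |c - 1| = max 1 (τN / τ) * |1 - τ / τN| := by
    rw [hcdef, inv_div, abs_sub_comm]
  calc |(μ {ω | X ω / τ ≤ u}).toReal - ((gaussianReal 0 1) (Set.Iic u)).toReal|
      = |(μ {ω | X ω / τN ≤ c * u}).toReal - ((gaussianReal 0 1) (Set.Iic u)).toReal| := by
        rw [hset]
    _ ≤ |(μ {ω | X ω / τN ≤ c * u}).toReal - ((gaussianReal 0 1) (Set.Iic (c * u))).toReal|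
        + |((gaussianReal 0 1) (Set.Iic (c * u))).toReal -
            ((gaussianReal 0 1) (Set.Iic u)).toReal| := abs_sub_le _ _ _
    _ ≤ (⨆ v : ℝ, |(μ {ω | X ω / τN ≤ v}).toReal -
          ((gaussianReal 0 1) (Set.Iic v)).toReal|) + max 1 (τN / τ) * |1 - τ / τN| := by
        refine add_le_add (le_ciSup bdd (c * u)) ?_
        rw [← hmaxeq]
        exact herr
end

section
/- Let ψ : ℝ → ℝ be smooth with bounded derivatives, lim_{|x|→∞} ψ(x) = −∞, and π = e^ψ a probability density with X ~ π. Then the constant τ² defined in the i.i.d. case by τ² = (1/144)[9 E(ψ''(X)²ψ'(X)²) + 18 E(ψ'(X)ψ''(X)ψ'''(X)) + 15 E(ψ'''(X)²)] satisfies τ² = (1/48)[5 E(ψ'''(X)²) − 3 E(ψ''(X)³)]. -/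
open Filter MeasureTheory

/- For `π = e^ψ` a probability density with `ψ` smooth, bounded derivatives and
`ψ → −∞` at infinity, and `X ~ π`, the constant
`τ² = (1/144)[9E(ψ''²ψ'²) + 18E(ψ'ψ''ψ''') + 15E(ψ'''²)]`
equals `(1/48)[5E(ψ'''²) − 3E(ψ''³)]`. -/
theorem stmt_14 (ψ : ℝ → ℝ) (hsmooth : ContDiff ℝ (⊤ : ℕ∞) ψ)
    (hbdd : ∀ n : ℕ, 1 ≤ n → ∃ C : ℝ, ∀ x, |iteratedDeriv n ψ x| ≤ C)
    (htend : Tendsto ψ (cocompact ℝ) atBot)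
    (hprob : ∫ x, Real.exp (ψ x) = 1) :
    (1 / 144) * (∫ x, (9 * (iteratedDeriv 2 ψ x) ^ 2 * (deriv ψ x) ^ 2 +
        18 * deriv ψ x * iteratedDeriv 2 ψ x * iteratedDeriv 3 ψ x +
        15 * (iteratedDeriv 3 ψ x) ^ 2) * Real.exp (ψ x)) =
      (1 / 48) * (∫ x, (5 * (iteratedDeriv 3 ψ x) ^ 2 -
        3 * (iteratedDeriv 2 ψ x) ^ 3) * Real.exp (ψ x)) := by
  -- basic facts
  have hπint : Integrable (fun x => Real.exp (ψ x)) := by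
    by_contra h
    rw [integral_undef h] at hprob
    norm_num at hprob
  -- continuity of iterated derivatives
  have cont : ∀ n : ℕ, Continuous (iteratedDeriv n ψ) := fun n =>
    hsmooth.continuous_iteratedDeriv n (by exact_mod_cast le_top)
  have diffn : ∀ n : ℕ, Differentiable ℝ (iteratedDeriv n ψ) := fun n =>
    hsmooth.differentiable_iteratedDeriv n (by exact_mod_cast lt_top_iff_ne_top.2 (by simp))
  have cont1 : Continuous (deriv ψ) := by
    have := cont 1; rwa [iteratedDeriv_one] at this
  -- bounds
  obtain ⟨C1, hC1⟩ := hbdd 1 le_rfl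
  obtain ⟨C2, hC2⟩ := hbdd 2 one_le_two
  obtain ⟨C3, hC3⟩ := hbdd 3 (by norm_num)
  have hC1' : ∀ x, |deriv ψ x| ≤ C1 := by
    intro x; have := hC1 x; rwa [iteratedDeriv_one] at this
  have hC1nn : 0 ≤ C1 := (abs_nonneg _).trans (hC1' 0)
  have hC2nn : 0 ≤ C2 := (abs_nonneg _).trans (hC2 0)
  have hC3nn : 0 ≤ C3 := (abs_nonneg _).trans (hC3 0)
  -- integrability of (bounded continuous) * exp ψ
  have hint : ∀ h : ℝ → ℝ, Continuous h → (∃ C, ∀ x, |h x| ≤ C) →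
      Integrable (fun x => h x * Real.exp (ψ x)) := by
    intro h hc ⟨C, hC⟩
    exact hπint.bdd_mul hc.aestronglyMeasurable (Filter.Eventually.of_forall fun x => by simpa using hC x)
  -- hasDerivAt for iterated derivatives
  have hd : ∀ (n : ℕ) (x : ℝ),
      HasDerivAt (iteratedDeriv n ψ) (iteratedDeriv (n + 1) ψ x) x := by
    intro n x
    rw [iteratedDeriv_succ]
    exact ((diffn n) x).hasDerivAt
  have hdψ : ∀ x, HasDerivAt ψ (deriv ψ x) x := fun x =>
    (hsmooth.differentiable (by simp) x).hasDerivAt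
  have hd1 : ∀ x, HasDerivAt (deriv ψ) (iteratedDeriv 2 ψ x) x := by
    intro x
    have := hd 1 x
    rwa [iteratedDeriv_one] at this
  -- the key integration-by-parts identity
  have key : (∫ x, ((iteratedDeriv 2 ψ x) ^ 3 +
      2 * deriv ψ x * iteratedDeriv 2 ψ x * iteratedDeriv 3 ψ x +
      (deriv ψ x) ^ 2 * (iteratedDeriv 2 ψ x) ^ 2) * Real.exp (ψ x)) = 0 := by
    set g : ℝ → ℝ := fun x => deriv ψ x * (iteratedDeriv 2 ψ x) ^ 2 * Real.exp (ψ x) with hg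
    set g' : ℝ → ℝ := fun x => ((iteratedDeriv 2 ψ x) ^ 3 +
      2 * deriv ψ x * iteratedDeriv 2 ψ x * iteratedDeriv 3 ψ x +
      (deriv ψ x) ^ 2 * (iteratedDeriv 2 ψ x) ^ 2) * Real.exp (ψ x) with hg'
    have hder : ∀ x, HasDerivAt g (g' x) x := by
      intro x
      have h1 : HasDerivAt (fun x => deriv ψ x * (iteratedDeriv 2 ψ x) ^ 2)
          (iteratedDeriv 2 ψ x * (iteratedDeriv 2 ψ x) ^ 2 +
            deriv ψ x * (2 * iteratedDeriv 2 ψ x * iteratedDeriv 3 ψ x)) x :=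
        (hd1 x).mul (((hd 2 x).pow 2).congr_deriv (by ring))
      have h2 : HasDerivAt (fun x => Real.exp (ψ x)) (Real.exp (ψ x) * deriv ψ x) x :=
        ((hdψ x).exp).congr_deriv (by ring)
      have : HasDerivAt (fun y => deriv ψ y * iteratedDeriv 2 ψ y ^ 2 * Real.exp (ψ y)) _ x :=
        h1.mul h2
      convert this using 1
      simp only [hg']
      ring
    have hintg' : Integrable g' := by
      apply hint
      · exact ((((cont 2).pow 3).add (((continuous_const.mul cont1).mul (cont 2)).mul
          (cont 3))).add ((cont1.pow 2).mul ((cont 2).pow 2)))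
      · refine ⟨C2 ^ 3 + 2 * C1 * C2 * C3 + C1 ^ 2 * C2 ^ 2, fun x => ?_⟩
        refine (abs_add_le _ _).trans (add_le_add ((abs_add_le _ _).trans (add_le_add ?_ ?_)) ?_)
        · rw [abs_pow]
          exact pow_le_pow_left₀ (abs_nonneg _) (hC2 x) 3
        · have : |2 * deriv ψ x * iteratedDeriv 2 ψ x * iteratedDeriv 3 ψ x|
              = 2 * |deriv ψ x| * |iteratedDeriv 2 ψ x| * |iteratedDeriv 3 ψ x| := by
            simp [abs_mul]
          rw [this]
          gcongr
          exacts [hC1' x, hC2 x, hC3 x]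
        · rw [abs_mul, abs_pow, abs_pow]
          gcongr
          exacts [hC1' x, hC2 x]
    -- limits of g at ±∞
    have hexp : Tendsto (fun x => Real.exp (ψ x)) (cocompact ℝ) (nhds 0) :=
      Real.tendsto_exp_atBot.comp htend
    have hcc : cocompact ℝ = atBot ⊔ atTop := cocompact_eq_atBot_atTop
    have hgb : ∀ x, ‖g x‖ ≤ C1 * C2 ^ 2 * Real.exp (ψ x) := by
      intro x
      have : ‖g x‖ = |deriv ψ x| * |iteratedDeriv 2 ψ x| ^ 2 * Real.exp (ψ x) := by
        simp [hg, abs_mul, abs_pow, abs_of_pos (Real.exp_pos _)]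
      rw [this]
      gcongr
      exacts [hC1' x, hC2 x]
    have htendg : Tendsto g (cocompact ℝ) (nhds 0) := by
      apply squeeze_zero_norm hgb
      have := hexp.const_mul (C1 * C2 ^ 2)
      simpa using this
    rw [hcc, tendsto_sup] at htendg
    have := integral_of_hasDerivAt_of_tendsto hder hintg' htendg.1 htendg.2
    simpa using this
    -- end key
  -- integrability of the two main integrands
  have hintF : Integrable (fun x => (9 * (iteratedDeriv 2 ψ x) ^ 2 * (deriv ψ x) ^ 2 +
        18 * deriv ψ x * iteratedDeriv 2 ψ x * iteratedDeriv 3 ψ x +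
        15 * (iteratedDeriv 3 ψ x) ^ 2) * Real.exp (ψ x)) := by
    apply hint
    · exact (((continuous_const.mul ((cont 2).pow 2)).mul (cont1.pow 2)).add
        (((continuous_const.mul cont1).mul (cont 2)).mul (cont 3))).add
        (continuous_const.mul ((cont 3).pow 2))
    · refine ⟨9 * C2 ^ 2 * C1 ^ 2 + 18 * C1 * C2 * C3 + 15 * C3 ^ 2, fun x => ?_⟩
      refine (abs_add_le _ _).trans (add_le_add ((abs_add_le _ _).trans (add_le_add ?_ ?_)) ?_)
      · have : |9 * (iteratedDeriv 2 ψ x) ^ 2 * (deriv ψ x) ^ 2|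
            = 9 * |iteratedDeriv 2 ψ x| ^ 2 * |deriv ψ x| ^ 2 := by simp [abs_mul, abs_pow]
        rw [this]; gcongr
        exacts [hC2 x, hC1' x]
      · have : |18 * deriv ψ x * iteratedDeriv 2 ψ x * iteratedDeriv 3 ψ x|
            = 18 * |deriv ψ x| * |iteratedDeriv 2 ψ x| * |iteratedDeriv 3 ψ x| := by
          simp [abs_mul]
        rw [this]; gcongr
        exacts [hC1' x, hC2 x, hC3 x]
      · have : |15 * (iteratedDeriv 3 ψ x) ^ 2| = 15 * |iteratedDeriv 3 ψ x| ^ 2 := by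
          simp [abs_mul, abs_pow]
        rw [this]; gcongr; exact hC3 x
  have hintG : Integrable (fun x => (5 * (iteratedDeriv 3 ψ x) ^ 2 -
        3 * (iteratedDeriv 2 ψ x) ^ 3) * Real.exp (ψ x)) := by
    apply hint
    · exact (continuous_const.mul ((cont 3).pow 2)).sub (continuous_const.mul ((cont 2).pow 3))
    · refine ⟨5 * C3 ^ 2 + 3 * C2 ^ 3, fun x => ?_⟩
      refine (abs_sub _ _).trans (add_le_add ?_ ?_)
      · have : |5 * (iteratedDeriv 3 ψ x) ^ 2| = 5 * |iteratedDeriv 3 ψ x| ^ 2 := by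
          simp [abs_mul, abs_pow]
        rw [this]; gcongr; exact hC3 x
      · have : |3 * (iteratedDeriv 2 ψ x) ^ 3| = 3 * |iteratedDeriv 2 ψ x| ^ 3 := by
          simp [abs_mul, abs_pow]
        rw [this]; gcongr; exact hC2 x
  -- combine
  have hsplit : (∫ x, (9 * (iteratedDeriv 2 ψ x) ^ 2 * (deriv ψ x) ^ 2 +
        18 * deriv ψ x * iteratedDeriv 2 ψ x * iteratedDeriv 3 ψ x +
        15 * (iteratedDeriv 3 ψ x) ^ 2) * Real.exp (ψ x))
      - 3 * (∫ x, (5 * (iteratedDeriv 3 ψ x) ^ 2 -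
        3 * (iteratedDeriv 2 ψ x) ^ 3) * Real.exp (ψ x))
      = 9 * (∫ x, ((iteratedDeriv 2 ψ x) ^ 3 +
        2 * deriv ψ x * iteratedDeriv 2 ψ x * iteratedDeriv 3 ψ x +
        (deriv ψ x) ^ 2 * (iteratedDeriv 2 ψ x) ^ 2) * Real.exp (ψ x)) := by
    rw [← integral_const_mul, ← integral_const_mul, ← integral_sub hintF (hintG.const_mul 3)]
    congr 1
    ext x
    ring
  rw [key, mul_zero] at hsplit
  have : (∫ x, (9 * (iteratedDeriv 2 ψ x) ^ 2 * (deriv ψ x) ^ 2 +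
        18 * deriv ψ x * iteratedDeriv 2 ψ x * iteratedDeriv 3 ψ x +
        15 * (iteratedDeriv 3 ψ x) ^ 2) * Real.exp (ψ x))
      = 3 * (∫ x, (5 * (iteratedDeriv 3 ψ x) ^ 2 -
        3 * (iteratedDeriv 2 ψ x) ^ 3) * Real.exp (ψ x)) := by linarith
  rw [this]
  ring
end

section
/- For the function v(a) = a·|Φ^{−1}(a/2)|^{2/3} defined for a ∈ (0,1), where Φ^{−1} is the inverse standard normal CDF, there exists a unique maximizer a* ∈ (0,1), characterized by the first-order condition (d/da)[a·|Φ^{−1}(a/2)|^{2/3}] = 0 at a = a*, and v is strictly increasing on (0, a*) and strictly decreasing on (a*, 1). -/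
open MeasureTheory ProbabilityTheory

open Real Set Filter Topology

/-- The standard normal cumulative distribution function. -/
noncomputable def stdNormalCDF (u : ℝ) : ℝ :=
  ((gaussianReal 0 1) (Set.Iic u)).toReal

namespace Aux19

noncomputable def pdf (x : ℝ) : ℝ := gaussianPDFReal 0 1 x

lemma pdf_eq : pdf = fun x => (Real.sqrt (2 * Real.pi))⁻¹ * Real.exp (-x ^ 2 / 2) := by
  funext x
  simp [pdf, gaussianPDFReal]

lemma pdf_pos (x : ℝ) : 0 < pdf x := gaussianPDFReal_pos 0 1 x one_ne_zero

lemma pdf_neg (x : ℝ) : pdf (-x) = pdf x := by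
  simp [pdf_eq]

lemma hasDerivAt_pdf (x : ℝ) : HasDerivAt pdf (-x * pdf x) x := by
  rw [pdf_eq]
  have h1 : HasDerivAt (fun x : ℝ => -x ^ 2 / 2) (-x) x := by
    have := ((hasDerivAt_pow 2 x).neg.div_const 2)
    refine this.congr_deriv ?_
    push_cast
    ring
  have := (h1.exp.const_mul ((Real.sqrt (2 * Real.pi))⁻¹))
  refine this.congr_deriv ?_
  ring

lemma cdf_eq_integral (u : ℝ) : stdNormalCDF u = ∫ x in Iic u, pdf x := by
  rw [stdNormalCDF, gaussianReal_apply_eq_integral 0 one_ne_zero,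
    ENNReal.toReal_ofReal]
  · rfl
  · exact setIntegral_nonneg measurableSet_Iic fun x _ => gaussianPDFReal_nonneg 0 1 x

lemma integrable_pdf : MeasureTheory.Integrable pdf := integrable_gaussianPDFReal 0 1

lemma cdf_eq' (u : ℝ) : stdNormalCDF u = stdNormalCDF 0 + ∫ x in (0:ℝ)..u, pdf x := by
  rw [cdf_eq_integral, cdf_eq_integral, ← intervalIntegral.integral_Iic_sub_Iic
    integrable_pdf.integrableOn integrable_pdf.integrableOn]
  ring

lemma hasDerivAt_cdf (u : ℝ) : HasDerivAt stdNormalCDF (pdf u) u := by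
  have h : HasDerivAt (fun u => ∫ x in (0:ℝ)..u, pdf x) (pdf u) u :=
    intervalIntegral.integral_hasDerivAt_right integrable_pdf.intervalIntegrable
      integrable_pdf.aestronglyMeasurable.stronglyMeasurableAtFilter
      (hasDerivAt_pdf u).continuousAt
  have h2 : HasDerivAt (fun u => stdNormalCDF 0 + ∫ x in (0:ℝ)..u, pdf x) (pdf u) u :=
    h.const_add _
  exact h2.congr_of_eventuallyEq (Filter.Eventually.of_forall fun x => cdf_eq' x)

lemma strictMono_cdf : StrictMono stdNormalCDF := by
  apply strictMono_of_deriv_pos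
  intro x
  rw [(hasDerivAt_cdf x).deriv]
  exact pdf_pos x

lemma continuous_cdf : Continuous stdNormalCDF :=
  continuous_iff_continuousAt.2 fun x => (hasDerivAt_cdf x).continuousAt

lemma cdf_nonneg (x : ℝ) : 0 ≤ stdNormalCDF x := ENNReal.toReal_nonneg

lemma cdf_le_one (x : ℝ) : stdNormalCDF x ≤ 1 := by
  rw [stdNormalCDF]
  exact ENNReal.toReal_le_of_le_ofReal one_pos.le (by simpa using prob_le_one)

lemma cdf_pos (x : ℝ) : 0 < stdNormalCDF x :=
  lt_of_le_of_lt (cdf_nonneg (x - 1)) (strictMono_cdf (by linarith))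

lemma cdf_lt_one (x : ℝ) : stdNormalCDF x < 1 :=
  lt_of_lt_of_le (strictMono_cdf (show x < x + 1 by linarith)) (cdf_le_one (x + 1))

lemma cdf_neg_eq_integral (t : ℝ) : stdNormalCDF (-t) = ∫ x in Ioi t, pdf x := by
  rw [cdf_eq_integral]
  have : ∀ x, pdf x = pdf (-x) := fun x => (pdf_neg x).symm
  rw [show (∫ x in Iic (-t), pdf x) = ∫ x in Iic (-t), pdf (-x) by
    exact integral_congr_ae (Filter.Eventually.of_forall fun x => this x)]
  rw [integral_comp_neg_Iic, neg_neg]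

lemma cdf_add_cdf_neg (t : ℝ) : stdNormalCDF t + stdNormalCDF (-t) = 1 := by
  rw [cdf_eq_integral, cdf_neg_eq_integral,
    intervalIntegral.integral_Iic_add_Ioi integrable_pdf.integrableOn integrable_pdf.integrableOn]
  exact integral_gaussianPDFReal_eq_one 0 one_ne_zero

lemma cdf_zero : stdNormalCDF 0 = 1 / 2 := by
  have := cdf_add_cdf_neg 0
  rw [neg_zero] at this
  linarith

lemma tendsto_cdf_atTop : Tendsto stdNormalCDF atTop (𝓝 1) := by
  have h : Tendsto (fun x => (gaussianReal 0 1) (Iic x)) atTop (𝓝 ((gaussianReal 0 1) univ)) :=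
    tendsto_measure_Iic_atTop _
  rw [measure_univ] at h
  have := (ENNReal.tendsto_toReal ENNReal.one_ne_top).comp h
  exact (by simpa [Function.comp_def] using this :
    Tendsto (fun x => ((gaussianReal 0 1) (Iic x)).toReal) atTop (𝓝 1))

lemma surj_cdf {y : ℝ} (hy : y ∈ Ioo (0:ℝ) 1) : ∃ x, stdNormalCDF x = y := by
  obtain ⟨b, hb⟩ : ∃ b, y < stdNormalCDF b :=
    (tendsto_cdf_atTop.eventually (eventually_gt_nhds hy.2)).exists
  obtain ⟨c, hc⟩ : ∃ c, 1 - y < stdNormalCDF c :=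
    (tendsto_cdf_atTop.eventually (eventually_gt_nhds (by linarith [hy.1]))).exists
  have ha : stdNormalCDF (-c) < y := by
    have := cdf_add_cdf_neg c
    linarith
  have hab : -c ≤ b := by
    by_contra hcon
    exact absurd (strictMono_cdf (lt_of_not_ge hcon)) (by intro h; linarith)
  obtain ⟨x, _, hx⟩ := intermediate_value_Icc hab continuous_cdf.continuousOn
    ⟨ha.le, hb.le⟩
  exact ⟨x, hx⟩

/-- the inverse CDF -/
noncomputable def psi : ℝ → ℝ := Function.invFun stdNormalCDF

lemma psi_cdf (x : ℝ) : psi (stdNormalCDF x) = x :=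
  Function.leftInverse_invFun strictMono_cdf.injective x

lemma cdf_psi {y : ℝ} (hy : y ∈ Ioo (0:ℝ) 1) : stdNormalCDF (psi y) = y :=
  Function.invFun_eq (surj_cdf hy)

lemma strictMonoOn_psi : StrictMonoOn psi (Ioo (0:ℝ) 1) := by
  intro y1 h1 y2 h2 h12
  have := strictMono_cdf.lt_iff_lt (a := psi y1) (b := psi y2)
  rw [cdf_psi h1, cdf_psi h2] at this
  exact this.1 h12

lemma psi_neg {y : ℝ} (hy : y ∈ Ioo (0:ℝ) (1/2)) : psi y < 0 := by
  have h1 : y ∈ Ioo (0:ℝ) 1 := ⟨hy.1, by linarith [hy.2]⟩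
  have : stdNormalCDF (psi y) < stdNormalCDF 0 := by
    rw [cdf_psi h1, cdf_zero]; exact hy.2
  exact strictMono_cdf.lt_iff_lt.1 this

lemma tendsto_pdf_atTop : Tendsto pdf atTop (𝓝 0) := by
  rw [pdf_eq]
  have h1 : Tendsto (fun x : ℝ => -x ^ 2 / 2) atTop atBot := by
    apply Tendsto.atBot_div_const (by norm_num)
    exact tendsto_neg_atBot_iff.2 (tendsto_pow_atTop two_ne_zero)
  have := (Real.tendsto_exp_atBot.comp h1).const_mul ((Real.sqrt (2 * Real.pi))⁻¹)
  simpa using this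

lemma integral_Ioi_mul_pdf {t : ℝ} (ht : 0 < t) : ∫ x in Ioi t, x * pdf x = pdf t := by
  have hderiv : ∀ x ∈ Ici t, HasDerivAt (fun x => -pdf x) (x * pdf x) x := by
    intro x _
    exact (hasDerivAt_pdf x).neg.congr_deriv (by ring)
  have hpos : ∀ x ∈ Ioi t, 0 ≤ x * pdf x := fun x hx =>
    mul_nonneg (le_of_lt (lt_trans ht hx)) (pdf_pos x).le
  have htend : Tendsto (fun x => -pdf x) atTop (𝓝 0) := by
    simpa using tendsto_pdf_atTop.neg
  have := integral_Ioi_of_hasDerivAt_of_nonneg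
    (hderiv t self_mem_Ici).continuousAt.continuousWithinAt
    (fun x (hx : x ∈ Ioi t) => hderiv x (mem_Ici.2 (le_of_lt hx))) hpos htend
  simpa using this

lemma integrableOn_mul_pdf {t : ℝ} (ht : 0 < t) :
    IntegrableOn (fun x => x * pdf x) (Ioi t) := by
  have hderiv : ∀ x ∈ Ici t, HasDerivAt (fun x => -pdf x) (x * pdf x) x := by
    intro x _
    exact (hasDerivAt_pdf x).neg.congr_deriv (by ring)
  have hpos : ∀ x ∈ Ioi t, 0 ≤ x * pdf x := fun x hx =>
    mul_nonneg (le_of_lt (lt_trans ht hx)) (pdf_pos x).le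
  have htend : Tendsto (fun x => -pdf x) atTop (𝓝 0) := by
    simpa using tendsto_pdf_atTop.neg
  exact integrableOn_Ioi_deriv_of_nonneg' hderiv hpos htend

lemma mills {t : ℝ} (ht : 0 < t) : stdNormalCDF (-t) ≤ pdf t / t := by
  rw [cdf_neg_eq_integral]
  have h1 : (∫ x in Ioi t, pdf x) ≤ ∫ x in Ioi t, (x / t) * pdf x := by
    apply setIntegral_mono_on integrable_pdf.integrableOn _ measurableSet_Ioi
    · intro x hx
      have hx1 : 1 ≤ x / t := (one_le_div ht).2 (le_of_lt hx)
      nlinarith [pdf_pos x]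
    · have h := (integrableOn_mul_pdf ht).div_const t
      have heq : (fun x => (x / t) * pdf x) = fun x => (x * pdf x) / t := by
        funext x; ring
      rw [heq]
      exact h
  have h2 : (∫ x in Ioi t, (x / t) * pdf x) = pdf t / t := by
    have : ∀ x, (x / t) * pdf x = (x * pdf x) / t := fun x => by ring
    simp_rw [this, integral_div, integral_Ioi_mul_pdf ht]
  linarith

noncomputable def hfun (t : ℝ) : ℝ := 2/3 * stdNormalCDF (-t) - t * pdf t

lemma hasDerivAt_hfun (t : ℝ) : HasDerivAt hfun (pdf t * (t ^ 2 - 5/3)) t := by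
  have h1 : HasDerivAt (fun t : ℝ => stdNormalCDF (-t)) (-pdf t) t := by
    have := (hasDerivAt_cdf (-t)).comp t (hasDerivAt_neg t)
    simpa [pdf_neg, Function.comp_def] using this
  have h2 : HasDerivAt (fun t : ℝ => t * pdf t) (1 * pdf t + t * (-t * pdf t)) t :=
    (hasDerivAt_id t).mul (hasDerivAt_pdf t)
  have := (h1.const_mul (2/3 : ℝ)).sub h2
  refine this.congr_deriv ?_
  ring

lemma continuous_hfun : Continuous hfun :=
  continuous_iff_continuousAt.2 fun t => (hasDerivAt_hfun t).continuousAt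

lemma strictAntiOn_hfun : StrictAntiOn hfun (Icc 0 (Real.sqrt (5/3))) := by
  apply strictAntiOn_of_deriv_neg (convex_Icc _ _) continuous_hfun.continuousOn
  intro t ht
  rw [interior_Icc] at ht
  rw [(hasDerivAt_hfun t).deriv]
  apply mul_neg_of_pos_of_neg (pdf_pos t)
  have h1 : t ^ 2 < Real.sqrt (5/3) ^ 2 :=
    pow_lt_pow_left₀ ht.2 ht.1.le two_ne_zero
  rw [Real.sq_sqrt (by norm_num : (5:ℝ)/3 ≥ 0)] at h1
  linarith

lemma hfun_zero : hfun 0 = 1/3 := by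
  simp [hfun, neg_zero, cdf_zero]
  norm_num

lemma hfun_neg_of_large {t : ℝ} (ht : Real.sqrt (2/3) < t) : hfun t < 0 := by
  have ht0 : 0 < t := lt_of_le_of_lt (Real.sqrt_nonneg _) ht
  have ht2 : 2/3 < t ^ 2 := by
    have := pow_lt_pow_left₀ ht (Real.sqrt_nonneg _) two_ne_zero
    rwa [Real.sq_sqrt (by norm_num : (2:ℝ)/3 ≥ 0)] at this
  have hm := mills ht0
  have hp := pdf_pos t
  have key : 2/3 * (pdf t / t) - t * pdf t < 0 := by
    have h3 : 2/3 * (pdf t / t) - t * pdf t = pdf t * t⁻¹ * (2/3 - t^2) := by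
      field_simp
    rw [h3]
    apply mul_neg_of_pos_of_neg (mul_pos hp (inv_pos.2 ht0))
    linarith
  have : hfun t ≤ 2/3 * (pdf t / t) - t * pdf t := by
    simp only [hfun]
    nlinarith
  linarith

lemma hfun_one_neg : hfun 1 < 0 := by
  apply hfun_neg_of_large
  rw [show (1:ℝ) = Real.sqrt 1 by simp]
  exact Real.sqrt_lt_sqrt (by norm_num) (by norm_num)

/-- existence of the critical point t* -/
lemma exists_tstar : ∃ t ∈ Ioo (0:ℝ) 1, hfun t = 0 := by
  have h := intermediate_value_Ioo' (by norm_num : (0:ℝ) ≤ 1) continuous_hfun.continuousOn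
  have h0 : (0:ℝ) ∈ Ioo (hfun 1) (hfun 0) := ⟨hfun_one_neg, by rw [hfun_zero]; norm_num⟩
  obtain ⟨t, ht, h⟩ := h h0
  exact ⟨t, ht, h⟩

section tstar

variable {ts : ℝ} (hts : ts ∈ Ioo (0:ℝ) 1) (hz : hfun ts = 0)
include hts hz

lemma tstar_le : ts ≤ Real.sqrt (2/3) := by
  by_contra hcon
  exact absurd hz (ne_of_lt (hfun_neg_of_large (lt_of_not_ge hcon)))

lemma tstar_mem : ts ∈ Icc (0:ℝ) (Real.sqrt (5/3)) :=
  ⟨hts.1.le, le_trans (tstar_le hts hz)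
    (Real.sqrt_le_sqrt (by norm_num))⟩

lemma hfun_pos_of_lt {t : ℝ} (ht : t ∈ Ioo 0 ts) : 0 < hfun t := by
  have h := strictAntiOn_hfun ⟨ht.1.le, le_trans (le_of_lt ht.2)
    (tstar_mem hts hz).2⟩ (tstar_mem hts hz) ht.2
  rwa [hz] at h

lemma hfun_neg_of_gt {t : ℝ} (ht : ts < t) : hfun t < 0 := by
  rcases le_or_gt t (Real.sqrt (5/3)) with hle | hgt
  · have h := strictAntiOn_hfun (tstar_mem hts hz)
      ⟨le_trans hts.1.le ht.le, hle⟩ ht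
    rwa [hz] at h
  · exact hfun_neg_of_large (lt_of_le_of_lt (le_trans
      (Real.sqrt_le_sqrt (by norm_num)) (le_refl _)) (lt_of_le_of_lt
      (Real.sqrt_le_sqrt (by norm_num : (2:ℝ)/3 ≤ 5/3)) hgt))

end tstar

/-- the speed as a function of `t = -Φ⁻¹(a/2)` -/
noncomputable def gfun (t : ℝ) : ℝ := 2 * stdNormalCDF (-t) * t ^ ((2:ℝ)/3)

lemma rpow_key {t : ℝ} (ht : 0 < t) : t * t ^ (-(1:ℝ)/3) = t ^ ((2:ℝ)/3) := by
  rw [show t * t ^ (-(1:ℝ)/3) = t ^ (1:ℝ) * t ^ (-(1:ℝ)/3) by rw [Real.rpow_one],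
    ← Real.rpow_add ht]
  norm_num

lemma hasDerivAt_gfun {t : ℝ} (ht : 0 < t) :
    HasDerivAt gfun (2 * t ^ (-(1:ℝ)/3) * hfun t) t := by
  have h1 : HasDerivAt (fun t : ℝ => 2 * stdNormalCDF (-t)) (2 * -pdf t) t := by
    have := (hasDerivAt_cdf (-t)).comp t (hasDerivAt_neg t)
    simpa [pdf_neg] using this.const_mul 2
  have h2 : HasDerivAt (fun t : ℝ => t ^ ((2:ℝ)/3)) ((2/3) * t ^ ((2:ℝ)/3 - 1)) t :=
    Real.hasDerivAt_rpow_const (Or.inl ht.ne')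
  have h3 := h1.mul h2
  refine h3.congr_deriv (Eq.symm ?_)
  have e1 : (2:ℝ)/3 - 1 = -(1:ℝ)/3 := by norm_num
  rw [e1]
  have e2 := rpow_key ht
  simp only [hfun]
  linear_combination (-2 * pdf t) * e2

lemma gfun_strictMonoOn {ts : ℝ} (hts : ts ∈ Ioo (0:ℝ) 1) (hz : hfun ts = 0) :
    StrictMonoOn gfun (Ioc 0 ts) := by
  apply strictMonoOn_of_deriv_pos (convex_Ioc _ _)
  · intro t ht
    exact ((hasDerivAt_gfun ht.1).continuousAt).continuousWithinAt
  · intro t ht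
    rw [interior_Ioc] at ht
    rw [(hasDerivAt_gfun ht.1).deriv]
    have h1 := hfun_pos_of_lt hts hz ht
    have h2 : (0:ℝ) < t ^ (-(1:ℝ)/3) := Real.rpow_pos_of_pos ht.1 _
    positivity

lemma gfun_strictAntiOn {ts : ℝ} (hts : ts ∈ Ioo (0:ℝ) 1) (hz : hfun ts = 0) :
    StrictAntiOn gfun (Ici ts) := by
  apply strictAntiOn_of_deriv_neg (convex_Ici _)
  · intro t ht
    exact ((hasDerivAt_gfun (lt_of_lt_of_le hts.1 ht)).continuousAt).continuousWithinAt
  · intro t ht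
    rw [interior_Ici] at ht
    rw [(hasDerivAt_gfun (lt_trans hts.1 ht)).deriv]
    have h1 := hfun_neg_of_gt hts hz ht
    have h2 : (0:ℝ) < t ^ (-(1:ℝ)/3) := Real.rpow_pos_of_pos (lt_trans hts.1 ht) _
    nlinarith

end Aux19

open Aux19 in
theorem stmt_19 (v : ℝ → ℝ)
    (hv : ∀ a ∈ Set.Ioo (0 : ℝ) 1,
      v a = a * |Function.invFun stdNormalCDF (a / 2)| ^ ((2 : ℝ) / 3)) :
    ∃ astar ∈ Set.Ioo (0 : ℝ) 1,
      (∀ a ∈ Set.Ioo (0 : ℝ) 1, v a ≤ v astar) ∧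
      (∀ a ∈ Set.Ioo (0 : ℝ) 1, (∀ b ∈ Set.Ioo (0 : ℝ) 1, v b ≤ v a) → a = astar) ∧
      deriv v astar = 0 ∧
      StrictMonoOn v (Set.Ioc 0 astar) ∧
      StrictAntiOn v (Set.Ico astar 1) := by
  obtain ⟨ts, hts, hz⟩ := exists_tstar
  set astar := 2 * stdNormalCDF (-ts) with hastar_def
  have hcn : stdNormalCDF (-ts) ∈ Ioo (0:ℝ) (1/2) := by
    constructor
    · exact cdf_pos _
    · rw [← cdf_zero]
      exact strictMono_cdf (by linarith [hts.1])
  have hastar : astar ∈ Ioo (0:ℝ) 1 := ⟨by linarith [hcn.1], by linarith [hcn.2]⟩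
  have hhalf : astar / 2 = stdNormalCDF (-ts) := by rw [hastar_def]; ring
  have hpsi_astar : psi (astar / 2) = -ts := by rw [hhalf, psi_cdf]
  -- basic facts about T a = -psi (a/2)
  have hmem2 : ∀ a ∈ Ioo (0:ℝ) 1, a / 2 ∈ Ioo (0:ℝ) (1/2) :=
    fun a ha => ⟨by linarith [ha.1], by linarith [ha.2]⟩
  have hmem1 : ∀ a ∈ Ioo (0:ℝ) 1, a / 2 ∈ Ioo (0:ℝ) 1 :=
    fun a ha => ⟨by linarith [ha.1], by linarith [ha.2]⟩
  have hTpos : ∀ a ∈ Ioo (0:ℝ) 1, 0 < -psi (a / 2) :=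
    fun a ha => by linarith [psi_neg (hmem2 a ha)]
  have hvg : ∀ a ∈ Ioo (0:ℝ) 1, v a = gfun (-psi (a / 2)) := by
    intro a ha
    rw [hv a ha, gfun, neg_neg, cdf_psi (hmem1 a ha),
      show Function.invFun stdNormalCDF (a / 2) = psi (a / 2) from rfl,
      abs_of_neg (psi_neg (hmem2 a ha))]
    ring
  have hTanti : ∀ a ∈ Ioo (0:ℝ) 1, ∀ b ∈ Ioo (0:ℝ) 1, a < b →
      -psi (b / 2) < -psi (a / 2) := by
    intro a ha b hb hab
    have := strictMonoOn_psi (hmem1 a ha) (hmem1 b hb) (by linarith)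
    linarith
  have hTanti' : ∀ a ∈ Ioo (0:ℝ) 1, ∀ b ∈ Ioo (0:ℝ) 1, a ≤ b →
      -psi (b / 2) ≤ -psi (a / 2) := by
    intro a ha b hb hab
    rcases eq_or_lt_of_le hab with rfl | h
    · exact le_refl _
    · exact (hTanti a ha b hb h).le
  have hT_astar : -psi (astar / 2) = ts := by rw [hpsi_astar, neg_neg]
  -- strict monotonicity
  have hmono : StrictMonoOn v (Ioc 0 astar) := by
    intro a ha b hb hab
    have ha' : a ∈ Ioo (0:ℝ) 1 := ⟨ha.1, lt_of_le_of_lt ha.2 hastar.2⟩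
    have hb' : b ∈ Ioo (0:ℝ) 1 := ⟨hb.1, lt_of_le_of_lt hb.2 hastar.2⟩
    rw [hvg a ha', hvg b hb']
    have h1 : -psi (b / 2) < -psi (a / 2) := hTanti a ha' b hb' hab
    have h2 : ts ≤ -psi (b / 2) := by
      have := hTanti' b hb' astar hastar hb.2
      rwa [hT_astar] at this
    exact gfun_strictAntiOn hts hz h2 (le_trans h2 h1.le) h1
  have hanti : StrictAntiOn v (Ico astar 1) := by
    intro a ha b hb hab
    have ha' : a ∈ Ioo (0:ℝ) 1 := ⟨lt_of_lt_of_le hastar.1 ha.1, ha.2⟩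
    have hb' : b ∈ Ioo (0:ℝ) 1 := ⟨lt_of_lt_of_le hastar.1 hb.1, hb.2⟩
    rw [hvg a ha', hvg b hb']
    have h1 : -psi (b / 2) < -psi (a / 2) := hTanti a ha' b hb' hab
    have h2 : -psi (a / 2) ≤ ts := by
      have := hTanti' astar hastar a ha' ha.1
      rwa [hT_astar] at this
    exact gfun_strictMonoOn hts hz ⟨hTpos b hb', h1.le.trans h2⟩
      ⟨hTpos a ha', h2⟩ h1
  -- maximality
  have hmax : ∀ a ∈ Ioo (0:ℝ) 1, a ≠ astar → v a < v astar := by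
    intro a ha hne
    rcases lt_or_gt_of_ne hne with h | h
    · exact hmono ⟨ha.1, h.le⟩ ⟨hastar.1, le_refl _⟩ h
    · exact hanti ⟨le_refl _, hastar.2⟩ ⟨h.le, ha.2⟩ h
  refine ⟨astar, hastar, ?_, ?_, ?_, hmono, hanti⟩
  · intro a ha
    rcases eq_or_ne a astar with rfl | hne
    · exact le_refl _
    · exact (hmax a ha hne).le
  · intro a ha hamax
    by_contra hne
    exact absurd (hamax astar hastar) (not_le.2 (hmax a ha hne))
  · -- derivative zero
    have hastar2 : astar / 2 ∈ Ioo (0:ℝ) 1 := hmem1 astar hastar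
    have himg : psi '' Ioo (0:ℝ) 1 = univ :=
      eq_univ_of_forall fun x =>
        ⟨stdNormalCDF x, ⟨cdf_pos x, cdf_lt_one x⟩, psi_cdf x⟩
    have hcont : ContinuousAt psi (astar / 2) := by
      apply strictMonoOn_psi.continuousAt_of_image_mem_nhds
        (isOpen_Ioo.mem_nhds hastar2)
      rw [himg]
      exact univ_mem
    have hDpsi : HasDerivAt psi (pdf (-ts))⁻¹ (astar / 2) := by
      apply HasDerivAt.of_local_left_inverse hcont
      · rw [hpsi_astar]
        exact hasDerivAt_cdf (-ts)
      · exact (pdf_pos (-ts)).ne'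
      · exact Filter.eventually_of_mem (isOpen_Ioo.mem_nhds hastar2)
          fun y hy => cdf_psi hy
    have hD1 : HasDerivAt (fun a => psi (a / 2)) ((pdf (-ts))⁻¹ * (1/2)) astar := by
      have hin : HasDerivAt (fun a : ℝ => a / 2) (1/2) astar := by
        simpa using (hasDerivAt_id astar).div_const 2
      exact HasDerivAt.comp astar hDpsi hin
    have hD2 : HasDerivAt (fun a => -psi (a / 2)) (-((pdf (-ts))⁻¹ * (1/2))) astar :=
      hD1.neg
    have hD3 : HasDerivAt (fun a => (-psi (a / 2)) ^ ((2:ℝ)/3))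
        (-((pdf (-ts))⁻¹ * (1/2)) * ((2:ℝ)/3) * (-psi (astar / 2)) ^ ((2:ℝ)/3 - 1))
        astar := by
      apply hD2.rpow_const
      left
      rw [hT_astar]
      exact hts.1.ne'
    have hD4 : HasDerivAt (fun a => a * (-psi (a / 2)) ^ ((2:ℝ)/3))
        (1 * (-psi (astar / 2)) ^ ((2:ℝ)/3) +
          astar * (-((pdf (-ts))⁻¹ * (1/2)) * ((2:ℝ)/3) *
            (-psi (astar / 2)) ^ ((2:ℝ)/3 - 1))) astar :=
      (hasDerivAt_id astar).mul hD3
    have hveq : v =ᶠ[𝓝 astar] fun a => a * (-psi (a / 2)) ^ ((2:ℝ)/3) :=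
      Filter.eventually_of_mem (isOpen_Ioo.mem_nhds hastar) fun a ha => by
        rw [hv a ha, show Function.invFun stdNormalCDF (a / 2) = psi (a / 2) from rfl,
          abs_of_neg (psi_neg (hmem2 a ha))]
    have hDv := (hD4.congr_of_eventuallyEq hveq)
    rw [hDv.deriv]
    rw [hT_astar, pdf_neg]
    have e1 : (2:ℝ)/3 - 1 = -(1:ℝ)/3 := by norm_num
    rw [e1]
    have e2 := rpow_key hts.1
    have hP : pdf ts ≠ 0 := (pdf_pos ts).ne'
    have hz' : stdNormalCDF (-ts) = 3/2 * (ts * pdf ts) := by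
      simp only [hfun] at hz
      linarith
    rw [hastar_def, hz']
    have hinv : pdf ts * (pdf ts)⁻¹ = 1 := mul_inv_cancel₀ hP
    linear_combination (-1 : ℝ) * e2 + (-(ts * ts ^ (-(1:ℝ)/3))) * hinv
end
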